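/- On a closed orientable Kähler gradient Ricci shrinker with dim H^{1,1}(M) = 1, the shrinker is linearly unstable unless for a twisted harmonic (1,1)-form ω (i.e. Δ_{f,H} ω = 0) the symmetric tensor S(ω) = ω(J·,·) is a nonzero real multiple of the Ricci tensor. -/

import Mathlib

/-!
A tensor `h` with `div_f h = 0` and `Δ_{f,L} h = 0` also has `υ_h = 0`, so only the
zeroth-order terms of the stability operator survive and
`ν''(h) = (|h|² |Ric|² − ⟨Ric, h⟩²) / (2τ |Ric|²)`, using `∫ R dm = 2τ |Ric|²`.
The numerator is positive by the strict Cauchy–Schwarz inequality unless `h ∥ Ric`.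
-/

/-- Abstract model of a closed orientable gradient Ricci shrinker `(M, g, f, τ)`:
`F` is the space of smooth functions, `Ω` the space of 1-forms, `S` the space of
symmetric covariant 2-tensors, together with the weighted differential operators
of Cao–Zhu and the geometric identities satisfied on such a shrinker. -/
structure GradientRicciShrinker (F Ω S : Type*) [AddCommGroup F] [Module ℝ F]
    [AddCommGroup Ω] [Module ℝ Ω] [AddCommGroup S] [Module ℝ S] where
  /-- the constant `τ > 0` of the shrinker -/
  τ : ℝ
  τ_pos : 0 < τ
  /-- the potential function `f` -/
  f : F
  /-- the constant function `1` -/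
  one : F
  /-- the metric tensor `g` -/
  gMet : S
  /-- the Ricci tensor -/
  Ric : S
  /-- the scalar curvature -/
  Rsc : F
  /-- exterior derivative on functions -/
  d : F →ₗ[ℝ] Ω
  /-- weighted divergence `div_f` on 1-forms: `div_f ω = div ω − ω(∇f)` -/
  div1 : Ω →ₗ[ℝ] F
  /-- weighted divergence `div_f` on symmetric 2-tensors -/
  div2 : S →ₗ[ℝ] Ω
  /-- `div_f^†`, the formal adjoint of `div_f`; `div_f^† ω = −(1/2) L_{#ω} g` -/
  divDag : Ω →ₗ[ℝ] S
  /-- Lie derivative of the metric `ω ↦ L_{#ω} g` -/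
  lie : Ω →ₗ[ℝ] S
  /-- Hessian `∇²` -/
  hess : F →ₗ[ℝ] S
  /-- weighted Laplacian `Δ_f = Δ − ∇_{∇f}` on functions -/
  lapF : F →ₗ[ℝ] F
  /-- weighted rough Laplacian `Δ_f = Δ − ∇_{∇f}` on 1-forms -/
  lap1 : Ω →ₗ[ℝ] Ω
  /-- weighted Lichnerowicz Laplacian `Δ_{f,L} h = Δ_f h + 2Rm(h,−) − (1/τ) h` -/
  lapL : S →ₗ[ℝ] S
  /-- integration against `dm = (4πτ)^{−n/2} e^{−f} dv` -/
  integral : F →ₗ[ℝ] ℝ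
  /-- weighted global `L²` inner product on functions -/
  ipF : F →ₗ[ℝ] F →ₗ[ℝ] ℝ
  /-- weighted global `L²` inner product on 1-forms -/
  ipΩ : Ω →ₗ[ℝ] Ω →ₗ[ℝ] ℝ
  /-- weighted global `L²` inner product on symmetric 2-tensors -/
  ipS : S →ₗ[ℝ] S →ₗ[ℝ] ℝ
  ipF_symm : ∀ a b, ipF a b = ipF b a
  ipΩ_symm : ∀ ω η, ipΩ ω η = ipΩ η ω
  ipS_symm : ∀ h k, ipS h k = ipS k h
  ipS_nonneg : ∀ h, 0 ≤ ipS h h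
  ipS_def_pos : ∀ h, h ≠ 0 → 0 < ipS h h
  ipF_nonneg : ∀ a, 0 ≤ ipF a a
  ipΩ_nonneg : ∀ ω, 0 ≤ ipΩ ω ω
  /-- the normalization `∫_M dm = 1` -/
  integral_one : integral one = 1
  /-- the shrinking gradient Ricci soliton equation `Ric + ∇²f = (1/(2τ)) g` -/
  soliton : Ric + hess f = (1 / (2 * τ)) • gMet
  /-- `div_f^† ω = −(1/2) L_{#ω} g` -/
  divDag_eq : ∀ ω, divDag ω = (-(1/2) : ℝ) • lie ω
  /-- `−d` is the formal adjoint of `div_f` on 1-forms -/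
  adj_d : ∀ a ω, ipF (div1 ω) a = - ipΩ ω (d a)
  /-- `div_f^†` is the formal adjoint of `div_f` on symmetric 2-tensors -/
  adj_div2 : ∀ h ω, ipΩ (div2 h) ω = ipS h (divDag ω)
  /-- `Δ_f` is self-adjoint on functions -/
  lapF_selfAdjoint : ∀ a b, ipF (lapF a) b = ipF a (lapF b)
  /-- `Δ_{f,L}` is self-adjoint -/
  lapL_selfAdjoint : ∀ h k, ipS (lapL h) k = ipS h (lapL k)
  /-- `Δ_{f,L} Ric = 0` -/
  lapL_Ric : lapL Ric = 0
  /-- `div_f Ric = 0` -/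
  div2_Ric : div2 Ric = 0
  /-- `∫_M R dm = 2τ ∫_M |Ric|² dm` -/
  intR_eq : integral Rsc = 2 * τ * ipS Ric Ric
  /-- `∫_M R dm > 0` on a nontrivial shrinker -/
  intR_pos : 0 < integral Rsc
  /-- the function `υ_h`, the unique solution of
  `Δ_f υ_h + (1/(2τ)) υ_h = div_f div_f h`, `∫ υ_h dm = 0` -/
  υ : S →ₗ[ℝ] F
  υ_eq : ∀ h, lapF (υ h) + (1 / (2 * τ)) • υ h = div1 (div2 h)
  υ_mean : ∀ h, integral (υ h) = 0
  υ_unique : ∀ (h : S) (u : F),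
    lapF u + (1 / (2 * τ)) • u = div1 (div2 h) → integral u = 0 → u = υ h
  /-- spectral estimate: every nonzero eigenvalue of `Δ_f` on functions
  is strictly less than `−1/(2τ)` -/
  lapF_spec : ∀ (μ : ℝ) (a : F), a ≠ 0 → lapF a = μ • a →
    μ = 0 ∨ μ < -(1 / (2 * τ))
  /-- weighted maximum principle: `Δ_f u = 0` implies `u` is constant -/
  lapF_max : ∀ a : F, lapF a = 0 → ∃ c : ℝ, a = c • one

namespace GradientRicciShrinker

variable {F Ω S : Type*} [AddCommGroup F] [Module ℝ F]
    [AddCommGroup Ω] [Module ℝ Ω] [AddCommGroup S] [Module ℝ S]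

/-- The Cao–Zhu stability operator `N` of the `ν`-entropy:
`N(h) = (1/2)Δ_{f,L} h + (1/(2τ)) h + div_f^† div_f h + (1/2)∇² υ_h
  − Ric (∫⟨Ric,h⟩dm)/(∫R dm)`. -/
noncomputable def N (X : GradientRicciShrinker F Ω S) (h : S) : S :=
  (1 / 2 : ℝ) • X.lapL h + (1 / (2 * X.τ)) • h + X.divDag (X.div2 h)
    + (1 / 2 : ℝ) • X.hess (X.υ h)
    - (X.ipS X.Ric h / X.integral X.Rsc) • X.Ric

/-- The second variation of the `ν`-entropy in the direction `h`:
`ν''_g(h) = ∫_M ⟨N(h), h⟩ dm`. -/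
noncomputable def nuSecond (X : GradientRicciShrinker F Ω S) (h : S) : ℝ :=
  X.ipS (X.N h) h

end GradientRicciShrinker

variable {F Ω S : Type*} [AddCommGroup F] [Module ℝ F]
    [AddCommGroup Ω] [Module ℝ Ω] [AddCommGroup S] [Module ℝ S]

open GradientRicciShrinker

theorem LinearMap.BilinForm.apply_sq_lt_of_symm {K M : Type*} [Field K] [LinearOrder K]
    [IsStrictOrderedRing K] [AddCommGroup M] [Module K M] (B : LinearMap.BilinForm K M)
    (hp : ∀ x, x ≠ 0 → 0 < B x x) (hB : LinearMap.IsSymm B) {x y : M} (hy : y ≠ 0)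
    (hxy : ∀ c : K, c • y ≠ x) :
    B x y ^ 2 < B x x * B y y := by
  have hs : ∀ z, 0 ≤ B z z := fun z ↦ by
    rcases eq_or_ne z 0 with rfl | hz
    · simp
    · exact (hp z hz).le
  refine (B.apply_sq_le_of_symm hs hB x y).lt_of_ne fun he ↦ ?_
  refine B.not_linearIndependent_of_apply_mul_apply_eq hp y x ?_
    ((LinearIndependent.pair_iff' hy).2 hxy)
  rw [← hB.eq x y, RingHom.id_apply, ← sq, he, mul_comm]

namespace GradientRicciShrinker

variable (X : GradientRicciShrinker F Ω S)

theorem ipS_Ric_Ric_pos : 0 < X.ipS X.Ric X.Ric := by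
  have h := X.intR_pos
  rw [X.intR_eq] at h
  exact pos_of_mul_pos_right h (by linarith [X.τ_pos])

theorem Ric_ne_zero : X.Ric ≠ 0 := fun h ↦ by
  simpa [h] using X.ipS_Ric_Ric_pos

theorem υ_eq_zero_of_div2_eq_zero {h : S} (hdiv : X.div2 h = 0) : X.υ h = 0 :=
  (X.υ_unique h 0 (by simp [hdiv]) (map_zero _)).symm

theorem N_eq_of_div2_eq_zero_of_lapL_eq_zero {h : S} (hdiv : X.div2 h = 0)
    (hlap : X.lapL h = 0) :
    X.N h = (1 / (2 * X.τ)) • h - (X.ipS X.Ric h / X.integral X.Rsc) • X.Ric := by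
  simp [N, hlap, hdiv, X.υ_eq_zero_of_div2_eq_zero hdiv]

theorem nuSecond_eq_of_div2_eq_zero_of_lapL_eq_zero {h : S} (hdiv : X.div2 h = 0)
    (hlap : X.lapL h = 0) :
    X.nuSecond h = (X.ipS h h * X.ipS X.Ric X.Ric - X.ipS h X.Ric ^ 2)
      / (2 * X.τ * X.ipS X.Ric X.Ric) := by
  have hτ := X.τ_pos.ne'
  have hr := X.ipS_Ric_Ric_pos.ne'
  rw [nuSecond, X.N_eq_of_div2_eq_zero_of_lapL_eq_zero hdiv hlap, X.intR_eq]
  simp only [map_sub, map_smul, LinearMap.sub_apply, LinearMap.smul_apply, smul_eq_mul,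
    X.ipS_symm X.Ric h]
  field_simp

end GradientRicciShrinker

/-- A closed orientable Kähler gradient Ricci shrinker with
`dim H^{1,1}(M) = 1` is linearly unstable unless for a twisted harmonic
(1,1)-form ω the symmetric tensor `S(ω) = ω(J·,·)` is a nonzero real multiple
of the Ricci tensor. `Sω` below denotes `S(ω)`, which satisfies
`div_f S(ω) = 0` and `Δ_{f,L} S(ω) = 0`. -/
theorem kahler_unstable (X : GradientRicciShrinker F Ω S)
    (Sω : S) (hSne : Sω ≠ 0)
    (hdiv : X.div2 Sω = 0) (hlap : X.lapL Sω = 0)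
    (hnotRic : ∀ μ : ℝ, μ ≠ 0 → Sω ≠ μ • X.Ric) :
    0 < X.nuSecond Sω := by
  have hnotParallel : ∀ μ : ℝ, μ • X.Ric ≠ Sω := by
    intro μ hμ
    rcases eq_or_ne μ 0 with rfl | hμ0
    · exact hSne (by simpa using hμ.symm)
    · exact hnotRic μ hμ0 hμ.symm
  rw [X.nuSecond_eq_of_div2_eq_zero_of_lapL_eq_zero hdiv hlap]
  have hCS := LinearMap.BilinForm.apply_sq_lt_of_symm X.ipS X.ipS_def_pos ⟨X.ipS_symm⟩
    X.Ric_ne_zero hnotParallel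
  have hτ := X.τ_pos
  have hr := X.ipS_Ric_Ric_pos
  exact div_pos (sub_pos.2 hCS) (by positivity)
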